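/- Let γ ∈ (0,2), T > 0 and G ∈ 𝒮. Then there exists a constant C > 0 such that for every integer n ≥ 1, n^{γ−2} · Σ_{x,y ∈ ℤ} sup_{s ∈ [0,T]} ( G(s, y/n) − G(s, x/n) )² · p(y−x) ≤ C · max{ n^{γ−2}, n^{−1} }. -/

import Mathlib

open MeasureTheory Filter Set ENNReal

/-- Normalizing constant `c_γ = (Σ_{z ≠ 0} |z|^{-γ-1})⁻¹`. -/
noncomputable def cGamma (γ : ℝ) : ℝ :=
  (∑' z : ℤ, if z = 0 then 0 else |(z : ℝ)| ^ (-γ - 1))⁻¹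

/-- Transition probability `p(z) = c_γ |z|^{-γ-1}` for `z ≠ 0`, `p(0) = 0`. -/
noncomputable def transP (γ : ℝ) (z : ℤ) : ℝ :=
  if z = 0 then 0 else cGamma γ * |(z : ℝ)| ^ (-γ - 1)

/-- The space of test functions `𝒮 = P([0,T], C_c^∞(ℝ))`:
functions of the form `G(t,u) = Σ_{j=0}^k t^j G_j(u)` with `G_j` smooth compactly supported. -/
def IsTestS (G : ℝ → ℝ → ℝ) : Prop :=
  ∃ k : ℕ, ∃ Gj : ℕ → ℝ → ℝ,
    (∀ j ≤ k, ContDiff ℝ (⊤ : ℕ∞) (Gj j) ∧ HasCompactSupport (Gj j)) ∧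
    ∀ t u : ℝ, G t u = ∑ j ∈ Finset.range (k + 1), t ^ j * Gj j u

/-- The fractional Laplacian `-(-Δ)^{γ/2}` of a function `G : ℝ → ℝ`, defined as
`c_γ · lim_{ε → 0⁺} ∫_{|u-v| ≥ ε} (G(v) - G(u))/|u-v|^{1+γ} dv`. -/
noncomputable def fracLap (γ : ℝ) (G : ℝ → ℝ) (u : ℝ) : ℝ :=
  cGamma γ * limUnder (nhdsWithin 0 (Set.Ioi 0))
    (fun ε : ℝ => ∫ v in {v : ℝ | ε ≤ |u - v|}, (G v - G u) / |u - v| ^ (1 + γ))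

lemma aux_single (f : ℝ → ℝ) (hf : ContDiff ℝ (⊤ : ℕ∞) f) (hs : HasCompactSupport f) :
    ∃ M L A : ℝ, 0 ≤ M ∧ 0 ≤ L ∧ 0 ≤ A ∧ (∀ u, |f u| ≤ M) ∧
      (∀ u v, |f u - f v| ≤ L * |u - v|) ∧ (∀ u, A < |u| → f u = 0) := by
  obtain ⟨M, hM⟩ := hf.continuous.bounded_above_of_compact_support hs
  obtain ⟨L, hL⟩ := ((hf.continuous_deriv (by simp)).bounded_above_of_compact_support hs.deriv)
  obtain ⟨A, hA⟩ := hs.isBounded.subset_closedBall 0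
  have hd : Differentiable ℝ f := hf.differentiable (by simp)
  refine ⟨max M 0, max L 0, max A 0, le_max_right _ _, le_max_right _ _, le_max_right _ _,
    fun u => le_trans (hM u) (le_max_left _ _), ?_, ?_⟩
  · intro u v
    have hlip : LipschitzWith (⟨max L 0, le_max_right _ _⟩ : NNReal) f := by
      apply lipschitzWith_of_nnnorm_deriv_le hd
      intro x
      have := hL x
      apply NNReal.coe_le_coe.mp
      show (‖deriv f x‖₊ : ℝ) ≤ max L 0
      rw [coe_nnnorm]
      exact le_trans this (le_max_left _ _)
    have := hlip.dist_le_mul u v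
    have h' : dist (f u) (f v) ≤ max L 0 * dist u v := this; simpa [Real.dist_eq] using h'
  · intro u hu
    apply image_eq_zero_of_notMem_tsupport
    intro hmem
    have := hA hmem
    simp only [Metric.mem_closedBall, Real.dist_eq, sub_zero] at this
    have : |u| ≤ max A 0 := le_trans this (le_max_left _ _)
    linarith

lemma aux_unif (T : ℝ) (hT : 0 < T) (G : ℝ → ℝ → ℝ) (hG : IsTestS G) :
    ∃ M L A : ℝ, 0 ≤ M ∧ 0 ≤ L ∧ 0 ≤ A ∧ ∀ s ∈ Set.Icc (0:ℝ) T,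
      (∀ u, |G s u| ≤ M) ∧ (∀ u v, |G s u - G s v| ≤ L * |u - v|) ∧
      (∀ u, A < |u| → G s u = 0) := by
  obtain ⟨k, Gj, hGj, hrepr⟩ := hG
  have H : ∀ j, j ≤ k → ∃ M L A : ℝ, 0 ≤ M ∧ 0 ≤ L ∧ 0 ≤ A ∧ (∀ u, |Gj j u| ≤ M) ∧
      (∀ u v, |Gj j u - Gj j v| ≤ L * |u - v|) ∧ (∀ u, A < |u| → Gj j u = 0) :=
    fun j hj => aux_single _ (hGj j hj).1 (hGj j hj).2
  set B : ℝ := max 1 T ^ k with hB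
  have hB1 : (1:ℝ) ≤ B := one_le_pow₀ (le_max_left 1 T)
  classical
  set Mf : ℕ → ℝ := fun j => if hj : j ≤ k then (H j hj).choose else 0 with hMf
  set Lf : ℕ → ℝ := fun j => if hj : j ≤ k then (H j hj).choose_spec.choose else 0 with hLf
  set Af : ℕ → ℝ := fun j => if hj : j ≤ k then
    (H j hj).choose_spec.choose_spec.choose else 0 with hAf
  have hspec : ∀ j, j ≤ k → 0 ≤ Mf j ∧ 0 ≤ Lf j ∧ 0 ≤ Af j ∧ (∀ u, |Gj j u| ≤ Mf j) ∧
      (∀ u v, |Gj j u - Gj j v| ≤ Lf j * |u - v|) ∧ (∀ u, Af j < |u| → Gj j u = 0) := by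
    intro j hj
    simp only [hMf, hLf, hAf, dif_pos hj]
    exact (H j hj).choose_spec.choose_spec.choose_spec
  have hB0 : (0:ℝ) ≤ B := by linarith
  refine ⟨∑ j ∈ Finset.range (k+1), B * Mf j, ∑ j ∈ Finset.range (k+1), B * Lf j,
    ∑ j ∈ Finset.range (k+1), Af j, ?_, ?_, ?_, ?_⟩
  · exact Finset.sum_nonneg fun j hj => mul_nonneg hB0
      (hspec j (Finset.mem_range_succ_iff.mp hj)).1
  · exact Finset.sum_nonneg fun j hj => mul_nonneg hB0
      (hspec j (Finset.mem_range_succ_iff.mp hj)).2.1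
  · exact Finset.sum_nonneg fun j hj => (hspec j (Finset.mem_range_succ_iff.mp hj)).2.2.1
  intro s hs
  have hsj : ∀ j, j ≤ k → |s ^ j| ≤ B := by
    intro j hj
    rw [abs_pow]
    calc |s| ^ j ≤ max 1 T ^ j := by
          apply pow_le_pow_left₀ (abs_nonneg s)
          rw [abs_of_nonneg hs.1]; exact le_trans hs.2 (le_max_right 1 T)
      _ ≤ max 1 T ^ k := pow_le_pow_right₀ (le_max_left 1 T) hj
  refine ⟨?_, ?_, ?_⟩
  · intro u
    rw [hrepr]
    refine le_trans (Finset.abs_sum_le_sum_abs _ _) (Finset.sum_le_sum ?_)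
    intro j hj
    have hj' := Finset.mem_range_succ_iff.mp hj
    rw [abs_mul]
    exact mul_le_mul (hsj j hj') ((hspec j hj').2.2.2.1 u) (abs_nonneg _) hB0
  · intro u v
    rw [hrepr, hrepr, ← Finset.sum_sub_distrib, Finset.sum_mul]
    refine le_trans (Finset.abs_sum_le_sum_abs _ _) (Finset.sum_le_sum ?_)
    intro j hj
    have hj' := Finset.mem_range_succ_iff.mp hj
    rw [← mul_sub, abs_mul, mul_assoc]
    exact mul_le_mul (hsj j hj') ((hspec j hj').2.2.2.2.1 u v)
      (abs_nonneg _) hB0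
  · intro u hu
    rw [hrepr]
    apply Finset.sum_eq_zero
    intro j hj
    have hj' := Finset.mem_range_succ_iff.mp hj
    have : Af j ≤ ∑ i ∈ Finset.range (k+1), Af i :=
      Finset.single_le_sum (fun i hi => (hspec i (Finset.mem_range_succ_iff.mp hi)).2.2.1) hj
    rw [(hspec j hj').2.2.2.2.2 u (lt_of_le_of_lt this hu), mul_zero]

lemma aux_step (γ : ℝ) (hγ : 0 < γ) (a : ℝ) (ha : 1 ≤ a) :
    γ * (a + 1) ^ (-γ - 1) ≤ a ^ (-γ) - (a + 1) ^ (-γ) := by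
  have ha0 : (0:ℝ) < a := by linarith
  obtain ⟨c, hc, hc'⟩ := exists_hasDerivAt_eq_slope (fun t => t ^ (-γ))
    (fun t => (-γ) * t ^ (-γ - 1)) (by linarith : a < a + 1)
    (by
      apply ContinuousOn.rpow_const continuousOn_id
      intro x hx
      left; intro h; simp only [id] at h; rw [h] at hx; exact absurd hx.1 (by linarith))
    (fun x hx => Real.hasDerivAt_rpow_const (Or.inl (by cases hx; linarith)))
  have hc0 : 0 < c := by cases hc; linarith
  have : (a + 1) ^ (-γ) - a ^ (-γ) = -γ * c ^ (-γ - 1) := by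
    rw [hc']; ring
  have hmono : (a + 1) ^ (-γ - 1) ≤ c ^ (-γ - 1) :=
    Real.rpow_le_rpow_of_nonpos hc0 (by cases hc; linarith) (by linarith)
  nlinarith [hmono, hγ]

lemma aux_tailFin (γ : ℝ) (hγ : 0 < γ) (n : ℕ) (hn : 1 ≤ n) (N : ℕ) :
    ∑ m ∈ Finset.Icc (n+1) N, ((m:ℝ)) ^ (-γ - 1) ≤ (n:ℝ) ^ (-γ) / γ := by
  have key : ∀ N : ℕ, ∑ m ∈ Finset.Icc (n+1) N, ((m:ℝ)) ^ (-γ - 1)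
      ≤ ((n:ℝ) ^ (-γ) - ((max n N : ℕ) :ℝ) ^ (-γ)) / γ := by
    intro N
    induction N with
    | zero =>
      rw [Finset.Icc_eq_empty (by omega)]
      simp [Nat.max_eq_left (by omega : 0 ≤ n)]
    | succ N ih =>
      by_cases hNn : N + 1 ≤ n
      · rw [Finset.Icc_eq_empty (by omega)]
        rw [Nat.max_eq_left hNn]
        simp
      · have hnN : n ≤ N := by omega
        rw [Finset.sum_Icc_succ_top (by omega : n + 1 ≤ N + 1)]
        rw [Nat.max_eq_right hnN] at ih
        rw [Nat.max_eq_right (by omega : n ≤ N + 1)]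
        have hstep := aux_step γ hγ (N:ℝ) (by exact_mod_cast hnN.trans' hn)
        push_cast
        have : ((N:ℝ)+1) ^ (-γ-1) ≤ ((N:ℝ) ^ (-γ) - ((N:ℝ)+1) ^ (-γ)) / γ := by
          rw [le_div_iff₀ hγ]; nlinarith [hstep]
        calc ∑ m ∈ Finset.Icc (n+1) N, ((m:ℝ)) ^ (-γ - 1) + ((N:ℝ)+1) ^ (-γ-1)
            ≤ ((n:ℝ) ^ (-γ) - (N:ℝ) ^ (-γ)) / γ + ((N:ℝ) ^ (-γ) - ((N:ℝ)+1) ^ (-γ)) / γ := by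
              exact add_le_add ih this
          _ = ((n:ℝ) ^ (-γ) - ((N:ℝ)+1) ^ (-γ)) / γ := by ring
  refine le_trans (key N) ?_
  have h0 : (0:ℝ) ≤ ((max n N : ℕ):ℝ) ^ (-γ) := Real.rpow_nonneg (by positivity) _
  gcongr
  linarith

lemma aux_tailInt (γ : ℝ) (hγ : 0 < γ) (n : ℕ) (hn : 1 ≤ n) :
    ∑' z : ℤ, (if (n:ℤ) < |z| then ENNReal.ofReal (|(z:ℝ)| ^ (-γ - 1)) else 0)
      ≤ ENNReal.ofReal (2 * ((n:ℝ) ^ (-γ) / γ)) := by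
  classical
  set gnat : ℕ → ℝ≥0∞ := fun m => if n < m then ENNReal.ofReal ((m:ℝ) ^ (-γ - 1)) else 0
    with hgnat
  have hnat : ∀ N' : ℕ, ∑ m ∈ Finset.range (N'+1), gnat m
      ≤ ENNReal.ofReal ((n:ℝ) ^ (-γ) / γ) := by
    intro N'
    have heq : ∀ m : ℕ, gnat m
        = ENNReal.ofReal (if n < m then (m:ℝ) ^ (-γ - 1) else 0) := by
      intro m
      by_cases h : n < m <;> simp [hgnat, h]
    simp_rw [heq]
    rw [← ENNReal.ofReal_sum_of_nonneg (fun m _ => by positivity)]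
    apply ENNReal.ofReal_le_ofReal
    rw [← Finset.sum_filter]
    have hfil : (Finset.range (N'+1)).filter (fun m => n < m) = Finset.Icc (n+1) N' := by
      ext m
      simp only [Finset.mem_filter, Finset.mem_Icc, Finset.mem_range]
      omega
    rw [hfil]
    exact aux_tailFin γ hγ n hn N'
  apply Summable.tsum_le_of_sum_le ENNReal.summable
  intro s
  set N := s.sup Int.natAbs with hN
  set f : ℤ → ℝ≥0∞ := fun z => if (n:ℤ) < |z| then ENNReal.ofReal (|(z:ℝ)| ^ (-γ - 1)) else 0
    with hf
  have hsub : s ⊆ (Finset.range (N+1)).image (fun m : ℕ => (m:ℤ))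
      ∪ (Finset.range (N+1)).image (fun m : ℕ => -(m:ℤ)) := by
    intro z hz
    have hle : z.natAbs ≤ N := Finset.le_sup hz
    rw [Finset.mem_union, Finset.mem_image, Finset.mem_image]
    by_cases h0 : 0 ≤ z
    · exact Or.inl ⟨z.natAbs, Finset.mem_range.mpr (by omega), by omega⟩
    · exact Or.inr ⟨z.natAbs, Finset.mem_range.mpr (by omega), by omega⟩
  calc ∑ z ∈ s, f z ≤ ∑ z ∈ (Finset.range (N+1)).image (fun m : ℕ => (m:ℤ))
        ∪ (Finset.range (N+1)).image (fun m : ℕ => -(m:ℤ)), f z :=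
        Finset.sum_le_sum_of_subset hsub
    _ ≤ ∑ z ∈ (Finset.range (N+1)).image (fun m : ℕ => (m:ℤ)), f z
        + ∑ z ∈ (Finset.range (N+1)).image (fun m : ℕ => -(m:ℤ)), f z :=
        le_of_le_of_eq (self_le_add_right _ _) (Finset.sum_union_inter)
    _ = ∑ m ∈ Finset.range (N+1), f m + ∑ m ∈ Finset.range (N+1), f (-(m:ℤ)) := by
        rw [Finset.sum_image (fun a _ b _ h => by exact_mod_cast h),
          Finset.sum_image (fun a _ b _ h => by omega)]
    _ = ∑ m ∈ Finset.range (N+1), gnat m + ∑ m ∈ Finset.range (N+1), gnat m := by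
        congr 1 <;> apply Finset.sum_congr rfl <;> intro m _ <;>
          simp only [hf, hgnat, abs_neg, Int.cast_neg, Nat.abs_cast, Nat.cast_lt,
            Int.cast_natCast]
    _ ≤ ENNReal.ofReal ((n:ℝ) ^ (-γ) / γ) + ENNReal.ofReal ((n:ℝ) ^ (-γ) / γ) :=
        add_le_add (hnat N) (hnat N)
    _ = ENNReal.ofReal (2 * ((n:ℝ) ^ (-γ) / γ)) := by
        rw [← ENNReal.ofReal_add (by positivity) (by positivity)]; ring_nf

lemma cGamma_nonneg (γ : ℝ) : 0 ≤ cGamma γ := by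
  apply inv_nonneg.mpr
  apply tsum_nonneg
  intro z
  split <;> positivity

lemma cGamma_le_one (γ : ℝ) (hγ : 0 < γ) : cGamma γ ≤ 1 := by
  have hsum : Summable (fun z : ℤ => if z = 0 then (0:ℝ) else |(z:ℝ)| ^ (-γ - 1)) := by
    apply (Real.summable_abs_int_rpow (show 1 < γ + 1 by linarith)).congr
    intro z
    by_cases h : z = 0
    · subst h
      simp only [if_true, Int.cast_zero, abs_zero]
      rw [Real.zero_rpow (by linarith : -(γ+1) ≠ 0)]
    · rw [if_neg h]; congr 1; ring
  have h1 : (1:ℝ) ≤ ∑' z : ℤ, if z = 0 then (0:ℝ) else |(z:ℝ)| ^ (-γ - 1) := by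
    have := Summable.le_tsum hsum 1 (fun j _ => by split <;> positivity)
    simpa using this
  rw [cGamma]
  exact inv_le_one_of_one_le₀ h1

lemma transP_nonneg (γ : ℝ) (z : ℤ) : 0 ≤ transP γ z := by
  rw [transP]
  split
  · exact le_refl 0
  · exact mul_nonneg (cGamma_nonneg γ) (Real.rpow_nonneg (abs_nonneg _) _)

set_option maxHeartbeats 2000000 in
/-- Proposition A.10-type bound. -/
theorem statement12 (γ T : ℝ) (hγ : γ ∈ Set.Ioo (0 : ℝ) 2) (hT : 0 < T)
    (G : ℝ → ℝ → ℝ) (hG : IsTestS G) :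
    ∃ C : ℝ, 0 < C ∧ ∀ n : ℕ, 1 ≤ n →
      ENNReal.ofReal ((n : ℝ) ^ (γ - 2)) *
        ∑' q : ℤ × ℤ, ⨆ s ∈ Set.Icc (0 : ℝ) T, ENNReal.ofReal
          ((G s ((q.2 : ℝ) / n) - G s ((q.1 : ℝ) / n)) ^ 2 * transP γ (q.2 - q.1))
      ≤ ENNReal.ofReal (C * max ((n : ℝ) ^ (γ - 2)) ((n : ℝ) ^ (-1 : ℝ))) := by
  obtain ⟨hγ0, hγ2⟩ := hγ
  obtain ⟨M, L, A, hM0, hL0, hA0, hMLA⟩ := aux_unif T hT G hG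
  set a : ℕ := ⌈A⌉₊ + 1 with ha
  have haA : A ≤ (a:ℝ) := by
    have := Nat.le_ceil A
    have h2 : ((⌈A⌉₊:ℕ):ℝ) ≤ (a:ℝ) := by rw [ha]; push_cast; linarith
    linarith
  have ha1 : (1:ℝ) ≤ (a:ℝ) := by
    rw [ha]; push_cast; linarith [Nat.cast_nonneg (α := ℝ) ⌈A⌉₊]
  have haa : (a:ℝ) = (⌈A⌉₊:ℝ) + 1 := by rw [ha]; push_cast; ring
  refine ⟨18*(a:ℝ)*L^2 + 48*(a:ℝ)*M^2/γ + 1, by positivity, ?_⟩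
  intro n hn
  have hn1 : (1:ℝ) ≤ (n:ℝ) := by exact_mod_cast hn
  have hn0 : (0:ℝ) < n := by linarith
  have hcγ1 := cGamma_le_one γ hγ0
  have hcγ0 := cGamma_nonneg γ
  classical
  set h : ℤ → ℝ≥0∞ := fun x => if |x| ≤ ((a*n:ℕ):ℤ) then 1 else 0 with hh
  set K : ℤ → ℝ≥0∞ :=
    fun z => ENNReal.ofReal (min (4*M^2) (L^2 * ((z:ℤ):ℝ)^2 / (n:ℝ)^2) * transP γ z) with hK
  -- vanishing outside the support window
  have hzero : ∀ x : ℤ, ¬(|x| ≤ ((a*n:ℕ):ℤ)) → ∀ s ∈ Set.Icc (0:ℝ) T,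
      G s ((x:ℝ)/n) = 0 := by
    intro x hx s hs
    apply (hMLA s hs).2.2
    have h1 : ((a*n:ℕ):ℤ) + 1 ≤ |x| := by omega
    have h2 : ((a:ℝ)*(n:ℝ)) + 1 ≤ |(x:ℝ)| := by
      have h2' : (((a*n:ℕ):ℤ):ℝ) + 1 ≤ ((|x|:ℤ):ℝ) := by exact_mod_cast h1
      rw [Int.cast_abs] at h2'
      push_cast at h2'
      rw [haa] at h2' ⊢
      linarith
    rw [abs_div, abs_of_pos hn0]
    rw [lt_div_iff₀ hn0]
    have : A * (n:ℝ) ≤ (a:ℝ) * n := by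
      apply mul_le_mul_of_nonneg_right haA hn0.le
    linarith
  -- pointwise bound on each term of the double sum
  have hterm : ∀ q : ℤ × ℤ,
      (⨆ s ∈ Set.Icc (0:ℝ) T, ENNReal.ofReal
        ((G s ((q.2:ℝ)/n) - G s ((q.1:ℝ)/n))^2 * transP γ (q.2 - q.1)))
        ≤ (h q.1 + h q.2) * K (q.2 - q.1) := by
    rintro ⟨x, y⟩
    apply iSup₂_le
    intro s hs
    by_cases hxy : ¬(|x| ≤ ((a*n:ℕ):ℤ)) ∧ ¬(|y| ≤ ((a*n:ℕ):ℤ))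
    · rw [hzero x hxy.1 s hs, hzero y hxy.2 s hs]
      simp
    · have hone : (1:ℝ≥0∞) ≤ h x + h y := by
        rcases not_and_or.mp hxy with hx | hy
        · rw [not_not] at hx
          rw [hh]; simp only [if_pos hx]
          exact le_add_right le_rfl
        · rw [not_not] at hy
          rw [hh]; simp only [if_pos hy]
          exact le_add_left le_rfl
      obtain ⟨hMb, hLb, _⟩ := hMLA s hs
      have claim : (G s ((y:ℝ)/n) - G s ((x:ℝ)/n))^2
          ≤ min (4*M^2) (L^2 * (((y - x : ℤ)):ℝ)^2 / (n:ℝ)^2) := by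
        apply le_min
        · have h1 : |G s ((y:ℝ)/n) - G s ((x:ℝ)/n)| ≤ 2*M := by
            calc |G s ((y:ℝ)/n) - G s ((x:ℝ)/n)|
                ≤ |G s ((y:ℝ)/n)| + |G s ((x:ℝ)/n)| := abs_sub _ _
              _ ≤ M + M := add_le_add (hMb _) (hMb _)
              _ = 2*M := by ring
          obtain ⟨hlo, hhi⟩ := abs_le.mp h1
          nlinarith
        · have h2 : |G s ((y:ℝ)/n) - G s ((x:ℝ)/n)| ≤ L * |((y:ℝ)/n - (x:ℝ)/n)| :=
            hLb _ _
          have h3 : ((y:ℝ)/n - (x:ℝ)/n) = (((y - x : ℤ)):ℝ)/n := by push_cast; ring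
          rw [h3] at h2
          obtain ⟨hlo, hhi⟩ := abs_le.mp h2
          have h4 : (L * |(((y - x : ℤ)):ℝ)/n|)^2 = L^2 * (((y - x : ℤ)):ℝ)^2 / (n:ℝ)^2 := by
            rw [mul_pow, sq_abs, div_pow]; ring
          nlinarith [sq_le_sq' hlo hhi]
      calc ENNReal.ofReal ((G s ((y:ℝ)/n) - G s ((x:ℝ)/n))^2 * transP γ (y - x))
          ≤ K (y - x) := by
            rw [hK]
            apply ENNReal.ofReal_le_ofReal
            exact mul_le_mul_of_nonneg_right claim (transP_nonneg γ _)
        _ = 1 * K (y - x) := (one_mul _).symm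
        _ ≤ (h x + h y) * K (y - x) := mul_le_mul_left hone _
  -- splitting the double sum
  have hshift1 : ∀ x : ℤ, ∑' y : ℤ, K (y - x) = ∑' z : ℤ, K z :=
    fun x => (Equiv.subRight x).tsum_eq K
  have hshift2 : ∀ x : ℤ, ∑' y : ℤ, K (x - y) = ∑' z : ℤ, K z :=
    fun x => (Equiv.subLeft x).tsum_eq K
  have hsplit : (∑' q : ℤ×ℤ, (h q.1 + h q.2) * K (q.2 - q.1))
      = (∑' x : ℤ, h x) * (∑' z : ℤ, K z) + (∑' x : ℤ, h x) * (∑' z : ℤ, K z) := by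
    have e1 : (∑' q : ℤ×ℤ, h q.1 * K (q.2 - q.1))
        = (∑' x : ℤ, h x) * (∑' z : ℤ, K z) := by
      rw [ENNReal.tsum_prod']
      calc (∑' x : ℤ, ∑' y : ℤ, h x * K (y - x))
          = ∑' x : ℤ, h x * ∑' y : ℤ, K (y - x) := by
            apply tsum_congr; intro x; rw [ENNReal.tsum_mul_left]
        _ = ∑' x : ℤ, h x * ∑' z : ℤ, K z := by
            apply tsum_congr; intro x; rw [hshift1 x]
        _ = (∑' x : ℤ, h x) * (∑' z : ℤ, K z) := ENNReal.tsum_mul_right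
    have e2 : (∑' q : ℤ×ℤ, h q.2 * K (q.2 - q.1))
        = (∑' x : ℤ, h x) * (∑' z : ℤ, K z) := by
      have eswap : (∑' q : ℤ×ℤ, h q.1 * K (q.1 - q.2))
          = ∑' q : ℤ×ℤ, h q.2 * K (q.2 - q.1) :=
        (Equiv.prodComm ℤ ℤ).tsum_eq (fun q : ℤ×ℤ => h q.2 * K (q.2 - q.1))
      rw [← eswap, ENNReal.tsum_prod']
      calc (∑' x : ℤ, ∑' y : ℤ, h x * K (x - y))
          = ∑' x : ℤ, h x * ∑' y : ℤ, K (x - y) := by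
            apply tsum_congr; intro x; rw [ENNReal.tsum_mul_left]
        _ = ∑' x : ℤ, h x * ∑' z : ℤ, K z := by
            apply tsum_congr; intro x; rw [hshift2 x]
        _ = (∑' x : ℤ, h x) * (∑' z : ℤ, K z) := ENNReal.tsum_mul_right
    calc (∑' q : ℤ×ℤ, (h q.1 + h q.2) * K (q.2 - q.1))
        = ∑' q : ℤ×ℤ, (h q.1 * K (q.2 - q.1) + h q.2 * K (q.2 - q.1)) := by
          apply tsum_congr; intro q; rw [add_mul]
      _ = (∑' q : ℤ×ℤ, h q.1 * K (q.2 - q.1)) + ∑' q : ℤ×ℤ, h q.2 * K (q.2 - q.1) :=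
          ENNReal.tsum_add
      _ = _ := by rw [e1, e2]
  -- bound on the indicator sum
  have hSH : (∑' x : ℤ, h x) ≤ ENNReal.ofReal (3*(a:ℝ)*(n:ℝ)) := by
    have hv : ∀ x ∉ Finset.Icc (-((a*n:ℕ):ℤ)) ((a*n:ℕ):ℤ), h x = 0 := by
      intro x hx
      rw [hh]; simp only
      rw [if_neg]
      intro habs
      exact hx (Finset.mem_Icc.mpr (abs_le.mp habs))
    rw [tsum_eq_sum hv]
    have hcard : (Finset.Icc (-((a*n:ℕ):ℤ)) ((a*n:ℕ):ℤ)).card = 2*(a*n)+1 := by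
      rw [Int.card_Icc]; omega
    calc (∑ x ∈ Finset.Icc (-((a*n:ℕ):ℤ)) ((a*n:ℕ):ℤ), h x)
        ≤ ∑ x ∈ Finset.Icc (-((a*n:ℕ):ℤ)) ((a*n:ℕ):ℤ), 1 := by
          apply Finset.sum_le_sum
          intro i _
          rw [hh]; simp only
          split <;> simp
      _ = ((2*(a*n)+1 : ℕ) : ℝ≥0∞) := by
          rw [Finset.sum_const, hcard, nsmul_eq_mul, mul_one]
      _ = ENNReal.ofReal ((2*(a*n)+1 : ℕ) : ℝ) := (ENNReal.ofReal_natCast _).symm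
      _ ≤ ENNReal.ofReal (3*(a:ℝ)*(n:ℝ)) := by
          apply ENNReal.ofReal_le_ofReal
          push_cast
          nlinarith [ha1, hn1]
  -- bound on the kernel sum
  set c1 : ℝ := L^2/(n:ℝ)^2 * max 1 ((n:ℝ)^(1-γ)) with hc1
  have hmax0 : (0:ℝ) ≤ max 1 ((n:ℝ)^(1-γ)) := le_trans zero_le_one (le_max_left _ _)
  have hc10 : 0 ≤ c1 := mul_nonneg (by positivity) hmax0
  have hKb : ∀ z : ℤ, K z ≤ (if z ≠ 0 ∧ |z| ≤ (n:ℤ) then ENNReal.ofReal c1 else 0)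
      + ENNReal.ofReal (4*M^2) *
        (if (n:ℤ) < |z| then ENNReal.ofReal (|(z:ℝ)|^(-γ-1)) else 0) := by
    intro z
    have hw : (0:ℝ) ≤ |(z:ℝ)|^(-γ-1) := Real.rpow_nonneg (abs_nonneg _) _
    by_cases hz0 : z = 0
    · subst hz0
      rw [hK]; simp [transP]
    by_cases hzn : |z| ≤ (n:ℤ)
    · rw [if_pos ⟨hz0, hzn⟩]
      apply le_add_right
      rw [hK, hc1]
      apply ENNReal.ofReal_le_ofReal
      have hz1 : (1:ℝ) ≤ |(z:ℝ)| := by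
        rw [← Int.cast_abs]
        exact_mod_cast Int.one_le_abs (by simpa using hz0)
      have hzn' : |(z:ℝ)| ≤ (n:ℝ) := by
        rw [← Int.cast_abs]
        exact_mod_cast hzn
      have hz0' : (0:ℝ) < |(z:ℝ)| := by linarith
      have hiden : ((z:ℤ):ℝ)^2 * |(z:ℝ)|^(-γ-1) = |(z:ℝ)|^(1-γ) := by
        rw [← sq_abs, ← Real.rpow_natCast |(z:ℝ)| 2, ← Real.rpow_add hz0']
        congr 1
        push_cast
        ring
      have hmaxb : ((z:ℤ):ℝ)^2 * |(z:ℝ)|^(-γ-1) ≤ max 1 ((n:ℝ)^(1-γ)) := by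
        rw [hiden]
        rcases le_or_gt (1-γ) 0 with hc | hc
        · exact le_trans (Real.rpow_le_one_of_one_le_of_nonpos hz1 hc) (le_max_left _ _)
        · exact le_trans (Real.rpow_le_rpow (abs_nonneg _) hzn' hc.le) (le_max_right _ _)
      simp only [transP, if_neg hz0]
      calc min (4*M^2) (L^2 * ((z:ℤ):ℝ)^2 / (n:ℝ)^2) * (cGamma γ * |(z:ℝ)|^(-γ-1))
          ≤ (L^2 * ((z:ℤ):ℝ)^2 / (n:ℝ)^2) * (1 * |(z:ℝ)|^(-γ-1)) := by
            apply mul_le_mul (min_le_right _ _)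
            · exact mul_le_mul_of_nonneg_right hcγ1 hw
            · exact mul_nonneg hcγ0 hw
            · positivity
        _ = L^2/(n:ℝ)^2 * (((z:ℤ):ℝ)^2 * |(z:ℝ)|^(-γ-1)) := by ring
        _ ≤ L^2/(n:ℝ)^2 * max 1 ((n:ℝ)^(1-γ)) :=
            mul_le_mul_of_nonneg_left hmaxb (by positivity)
    · have hlt : (n:ℤ) < |z| := by omega
      rw [if_neg (by tauto), if_pos hlt, zero_add,
        ← ENNReal.ofReal_mul (by positivity)]
      rw [hK]
      simp only [transP, if_neg hz0]
      apply ENNReal.ofReal_le_ofReal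
      calc min (4*M^2) (L^2 * ((z:ℤ):ℝ)^2 / (n:ℝ)^2) * (cGamma γ * |(z:ℝ)|^(-γ-1))
          ≤ (4*M^2) * (1 * |(z:ℝ)|^(-γ-1)) := by
            apply mul_le_mul (min_le_left _ _)
            · exact mul_le_mul_of_nonneg_right hcγ1 hw
            · exact mul_nonneg hcγ0 hw
            · positivity
        _ = 4*M^2 * |(z:ℝ)|^(-γ-1) := by ring
  have hK1 : (∑' z : ℤ, if z ≠ 0 ∧ |z| ≤ (n:ℤ) then ENNReal.ofReal c1 else 0)
      ≤ ENNReal.ofReal (3*(n:ℝ)*c1) := by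
    have hv : ∀ z ∉ Finset.Icc (-(n:ℤ)) (n:ℤ),
        (if z ≠ 0 ∧ |z| ≤ (n:ℤ) then ENNReal.ofReal c1 else 0) = 0 := by
      intro z hz
      rw [if_neg]
      rintro ⟨_, habs⟩
      exact hz (Finset.mem_Icc.mpr (abs_le.mp habs))
    rw [tsum_eq_sum hv]
    have hcard : (Finset.Icc (-(n:ℤ)) (n:ℤ)).card = 2*n+1 := by
      rw [Int.card_Icc]; omega
    calc (∑ z ∈ Finset.Icc (-(n:ℤ)) (n:ℤ),
          if z ≠ 0 ∧ |z| ≤ (n:ℤ) then ENNReal.ofReal c1 else 0)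
        ≤ ∑ z ∈ Finset.Icc (-(n:ℤ)) (n:ℤ), ENNReal.ofReal c1 := by
          apply Finset.sum_le_sum
          intro i _
          split <;> simp
      _ = ((2*n+1 : ℕ) : ℝ≥0∞) * ENNReal.ofReal c1 := by
          rw [Finset.sum_const, hcard, nsmul_eq_mul]
      _ = ENNReal.ofReal ((2*n+1 : ℕ) : ℝ) * ENNReal.ofReal c1 := by
          rw [ENNReal.ofReal_natCast]
      _ = ENNReal.ofReal (((2*n+1 : ℕ) : ℝ) * c1) :=
          (ENNReal.ofReal_mul (by positivity)).symm
      _ ≤ ENNReal.ofReal (3*(n:ℝ)*c1) := by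
          apply ENNReal.ofReal_le_ofReal
          apply mul_le_mul_of_nonneg_right _ hc10
          push_cast
          linarith
  have hSK : (∑' z : ℤ, K z)
      ≤ ENNReal.ofReal (3*(n:ℝ)*c1 + 4*M^2 * (2*((n:ℝ)^(-γ)/γ))) := by
    calc (∑' z : ℤ, K z)
        ≤ ∑' z : ℤ, ((if z ≠ 0 ∧ |z| ≤ (n:ℤ) then ENNReal.ofReal c1 else 0)
          + ENNReal.ofReal (4*M^2) *
            (if (n:ℤ) < |z| then ENNReal.ofReal (|(z:ℝ)|^(-γ-1)) else 0)) :=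
          ENNReal.tsum_le_tsum hKb
      _ = (∑' z : ℤ, if z ≠ 0 ∧ |z| ≤ (n:ℤ) then ENNReal.ofReal c1 else 0)
          + ENNReal.ofReal (4*M^2) *
            ∑' z : ℤ, (if (n:ℤ) < |z| then ENNReal.ofReal (|(z:ℝ)|^(-γ-1)) else 0) := by
          rw [ENNReal.tsum_add, ENNReal.tsum_mul_left]
      _ ≤ ENNReal.ofReal (3*(n:ℝ)*c1)
          + ENNReal.ofReal (4*M^2) * ENNReal.ofReal (2*((n:ℝ)^(-γ)/γ)) :=
          add_le_add hK1 (mul_le_mul_right (aux_tailInt γ hγ0 n hn) _)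
      _ = ENNReal.ofReal (3*(n:ℝ)*c1 + 4*M^2 * (2*((n:ℝ)^(-γ)/γ))) := by
          rw [← ENNReal.ofReal_mul (by positivity),
            ← ENNReal.ofReal_add (by positivity) (by positivity)]
  -- final real arithmetic
  set p : ℝ := (n:ℝ)^(γ-2) with hp
  set qq : ℝ := (n:ℝ)^(-1:ℝ) with hqq
  have hp0 : 0 ≤ p := Real.rpow_nonneg hn0.le _
  have hqq0 : 0 ≤ qq := Real.rpow_nonneg hn0.le _
  have hkey1 : p * max 1 ((n:ℝ)^(1-γ)) = max p qq := by
    rw [mul_max_of_nonneg _ _ hp0, mul_one, hp, hqq, ← Real.rpow_add hn0]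
    norm_num
  have hkey2 : p * ((n:ℝ) * (n:ℝ)^(-γ)) = qq := by
    have h5 : (n:ℝ) * (n:ℝ)^(-γ) = (n:ℝ)^(1-γ) := by
      rw [show (1-γ) = 1 + -γ by ring, Real.rpow_add hn0, Real.rpow_one]
    rw [h5, hp, hqq, ← Real.rpow_add hn0]
    norm_num
  have hreal : p * (3*(a:ℝ)*(n:ℝ) * (3*(n:ℝ)*c1 + 4*M^2 * (2*((n:ℝ)^(-γ)/γ)))
        + 3*(a:ℝ)*(n:ℝ) * (3*(n:ℝ)*c1 + 4*M^2 * (2*((n:ℝ)^(-γ)/γ))))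
      ≤ (18*(a:ℝ)*L^2 + 48*(a:ℝ)*M^2/γ + 1) * max p qq := by
    have expand : p * (3*(a:ℝ)*(n:ℝ) * (3*(n:ℝ)*c1 + 4*M^2 * (2*((n:ℝ)^(-γ)/γ)))
          + 3*(a:ℝ)*(n:ℝ) * (3*(n:ℝ)*c1 + 4*M^2 * (2*((n:ℝ)^(-γ)/γ))))
        = 18*(a:ℝ)*L^2 * (p * max 1 ((n:ℝ)^(1-γ)))
          + 48*(a:ℝ)*M^2/γ * (p * ((n:ℝ) * (n:ℝ)^(-γ))) := by
      rw [hc1]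
      field_simp
      ring
    rw [expand, hkey1, hkey2]
    have h1 : qq ≤ max p qq := le_max_right _ _
    have h2 : (0:ℝ) ≤ max p qq := le_trans hqq0 h1
    have h3 : 48*(a:ℝ)*M^2/γ * qq ≤ 48*(a:ℝ)*M^2/γ * max p qq :=
      mul_le_mul_of_nonneg_left h1 (by positivity)
    nlinarith [h2, h3, ha1, hL0]
  -- assembling everything
  calc ENNReal.ofReal ((n:ℝ)^(γ-2)) *
        ∑' q : ℤ × ℤ, ⨆ s ∈ Set.Icc (0 : ℝ) T, ENNReal.ofReal
          ((G s ((q.2 : ℝ) / n) - G s ((q.1 : ℝ) / n)) ^ 2 * transP γ (q.2 - q.1))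
      ≤ ENNReal.ofReal ((n:ℝ)^(γ-2)) *
        ∑' q : ℤ × ℤ, (h q.1 + h q.2) * K (q.2 - q.1) :=
        mul_le_mul_right (ENNReal.tsum_le_tsum hterm) _
    _ = ENNReal.ofReal ((n:ℝ)^(γ-2)) *
        ((∑' x : ℤ, h x) * (∑' z : ℤ, K z) + (∑' x : ℤ, h x) * (∑' z : ℤ, K z)) := by
        rw [hsplit]
    _ ≤ ENNReal.ofReal ((n:ℝ)^(γ-2)) *
        (ENNReal.ofReal (3*(a:ℝ)*(n:ℝ)) *
          ENNReal.ofReal (3*(n:ℝ)*c1 + 4*M^2 * (2*((n:ℝ)^(-γ)/γ)))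
        + ENNReal.ofReal (3*(a:ℝ)*(n:ℝ)) *
          ENNReal.ofReal (3*(n:ℝ)*c1 + 4*M^2 * (2*((n:ℝ)^(-γ)/γ)))) :=
        mul_le_mul_right (add_le_add (mul_le_mul' hSH hSK) (mul_le_mul' hSH hSK)) _
    _ = ENNReal.ofReal ((n:ℝ)^(γ-2) *
        (3*(a:ℝ)*(n:ℝ) * (3*(n:ℝ)*c1 + 4*M^2 * (2*((n:ℝ)^(-γ)/γ)))
          + 3*(a:ℝ)*(n:ℝ) * (3*(n:ℝ)*c1 + 4*M^2 * (2*((n:ℝ)^(-γ)/γ))))) := by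
        rw [← ENNReal.ofReal_mul (by positivity),
          ← ENNReal.ofReal_add (mul_nonneg (by positivity)
            (by positivity)) (mul_nonneg (by positivity) (by positivity)),
          ← ENNReal.ofReal_mul (Real.rpow_nonneg hn0.le _)]
    _ ≤ ENNReal.ofReal ((18*(a:ℝ)*L^2 + 48*(a:ℝ)*M^2/γ + 1) *
          max ((n:ℝ)^(γ-2)) ((n:ℝ)^(-1:ℝ))) :=
        ENNReal.ofReal_le_ofReal hreal
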